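/- Let s be a section of the flat real line bundle V over ℂ* × ℝ^{n-2} with holonomy −1 around the singular set {0}×ℝ^{n-2} (equivalently, an odd function under w ↦ −w on the double cover (w,t) ↦ (w²,t)). Suppose s satisfies the Hölder bound |s(p) − s(p')| ≤ K|p − p'|^α for all pairs p=(z,t), p'=(z',t') with |p−p'| ≤ (1/2)min(|z|,|z'|), comparing via parallel transport. Then |s(z,t)| ≤ C K |z|^α for a constant C depending only on α and n. -/

import Mathlib

/-!
Rotating the lift `w` by the angle `π/16` moves the point `z = w²` along its circle by the
angle `π/8`, a distance at most `|z|/2`, and stays on the same sheet, so the restricted Hölder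
bound costs at most `K |z|^α` per step. Sixteen steps carry `w` to `-w`, where `s` takes the
value `-s(w)`; hence `2 |s(w)| ≤ 16 K |z|^α`.
-/

/-- The distance downstairs on `ℂ × ℝ^{n-2}` between the images of `(w,t)` and
`(w',t')` under the double branched cover `(w,t) ↦ (w²,t)`. -/
noncomputable def coverDist (m : ℕ) (w w' : ℂ)
    (t t' : EuclideanSpace ℝ (Fin m)) : ℝ :=
  Real.sqrt (‖w ^ 2 - w' ^ 2‖ ^ 2 + ‖t - t'‖ ^ 2)

open Complex
open scoped Real

/-- Lifts `w, w'` with `‖w - w'‖ ≤ ‖w + w'‖` lie on the same sheet, so comparing `s` at them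
is comparing the section along parallel transport. -/
def RestrictedHolder (m : ℕ) (K α : ℝ) (s : ℂ → EuclideanSpace ℝ (Fin m) → ℝ) : Prop :=
  ∀ w w' t t', coverDist m w w' t t' ≤ (1/2) * min (‖w‖ ^ 2) (‖w'‖ ^ 2) →
    ‖w - w'‖ ≤ ‖w + w'‖ → |s w t - s w' t'| ≤ K * (coverDist m w w' t t') ^ α

lemma coverDist_mul_exp_self (m : ℕ) (w : ℂ) (θ : ℝ) (t : EuclideanSpace ℝ (Fin m)) :
    coverDist m w (w * exp (I * θ)) t t = ‖w‖ ^ 2 * ‖exp (I * (2 * θ : ℝ)) - 1‖ := by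
  have hsq : (w * exp (I * θ)) ^ 2 = w ^ 2 * exp (I * (2 * θ : ℝ)) := by
    rw [mul_pow, ← exp_nat_mul]
    push_cast
    ring_nf
  rw [coverDist, sub_self, norm_zero, zero_pow two_ne_zero, add_zero,
    Real.sqrt_sq (norm_nonneg _), hsq, ← mul_one_sub, norm_mul, norm_pow, norm_sub_rev]

lemma norm_sub_mul_le_norm_add_mul {z e : ℂ} (he : ‖e - 1‖ ≤ 1) :
    ‖z - z * e‖ ≤ ‖z + z * e‖ := by
  rw [← mul_one_sub, ← mul_one_add, norm_mul, norm_mul]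
  gcongr
  have htwo : ‖(2 : ℂ)‖ ≤ ‖1 + e‖ + ‖1 - e‖ := by
    simpa [← two_mul] using norm_add_le (1 + e) (1 - e)
  rw [norm_sub_rev] at he
  norm_num at htwo
  linarith

lemma norm_mul_exp_I_mul_ofReal (w : ℂ) (θ : ℝ) : ‖w * exp (I * θ)‖ = ‖w‖ := by
  rw [norm_mul, mul_comm I, norm_exp_ofReal_mul_I, mul_one]

namespace RestrictedHolder

variable {m : ℕ} {K α : ℝ} {s : ℂ → EuclideanSpace ℝ (Fin m) → ℝ}

lemma abs_sub_mul_exp_le (hs : RestrictedHolder m K α s) (hK : 0 ≤ K) (hα : 0 ≤ α)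
    {θ : ℝ} (hθ : |θ| ≤ 1/4) (w : ℂ) (t : EuclideanSpace ℝ (Fin m)) :
    |s w t - s (w * exp (I * θ)) t| ≤ K * (‖w‖ ^ 2) ^ α := by
  have hrot : ‖exp (I * (2 * θ : ℝ)) - 1‖ ≤ 1/2 := by
    calc _ ≤ ‖(2 * θ : ℝ)‖ := Real.norm_exp_I_mul_ofReal_sub_one_le
      _ ≤ 1/2 := by rw [Real.norm_eq_abs, abs_mul, abs_two]; linarith
  have hdist : coverDist m w (w * exp (I * θ)) t t ≤ (1/2) * ‖w‖ ^ 2 := by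
    rw [coverDist_mul_exp_self, mul_comm]
    gcongr
  have hsheet : ‖exp (I * θ) - 1‖ ≤ 1 :=
    Real.norm_exp_I_mul_ofReal_sub_one_le.trans (by rw [Real.norm_eq_abs]; linarith)
  have hbound := hs w _ t t
    (by rwa [norm_mul_exp_I_mul_ofReal, min_self]) (norm_sub_mul_le_norm_add_mul hsheet)
  refine hbound.trans (mul_le_mul_of_nonneg_left ?_ hK)
  exact Real.rpow_le_rpow (Real.sqrt_nonneg _)
    (hdist.trans (by linarith [sq_nonneg ‖w‖])) hα

lemma abs_sub_mul_exp_nat_mul_le (hs : RestrictedHolder m K α s) (hK : 0 ≤ K) (hα : 0 ≤ α)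
    {θ : ℝ} (hθ : |θ| ≤ 1/4) (w : ℂ) (t : EuclideanSpace ℝ (Fin m)) (n : ℕ) :
    |s w t - s (w * exp (I * (n * θ : ℝ))) t| ≤ n * (K * (‖w‖ ^ 2) ^ α) := by
  have hstep : ∀ k : ℕ, w * exp (I * ((k + 1 : ℕ) * θ : ℝ)) =
      w * exp (I * (k * θ : ℝ)) * exp (I * θ) := by
    intro k
    rw [mul_assoc, ← exp_add]
    push_cast
    ring_nf
  have htele := dist_le_range_sum_of_dist_le (f := fun k : ℕ => s (w * exp (I * (k * θ : ℝ))) t)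
    (d := fun _ => K * (‖w‖ ^ 2) ^ α) n fun {k} _ => by
      rw [Real.dist_eq, hstep, ← norm_mul_exp_I_mul_ofReal w (k * θ)]
      exact hs.abs_sub_mul_exp_le hK hα hθ _ t
  simpa [Real.dist_eq] using htele

end RestrictedHolder

theorem holder_section_vanishing_general (m : ℕ) (α : ℝ) (hα : 0 < α) :
    ∃ C : ℝ, 0 < C ∧
      ∀ (s : ℂ → EuclideanSpace ℝ (Fin m) → ℝ) (K : ℝ), 0 ≤ K →
        (∀ w t, s (-w) t = - s w t) →
        (∀ w w' t t',
          coverDist m w w' t t' ≤ (1/2) * min (‖w‖ ^ 2) (‖w'‖ ^ 2) →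
          ‖w - w'‖ ≤ ‖w + w'‖ →
          |s w t - s w' t'| ≤ K * (coverDist m w w' t t') ^ α) →
        ∀ w t, |s w t| ≤ C * K * (‖w‖ ^ 2) ^ α := by
  refine ⟨8, by norm_num, fun s K hK hodd hs w t => ?_⟩
  have hθ : |π / 16| ≤ 1/4 := by
    rw [abs_of_pos (by positivity)]
    linarith [Real.pi_lt_four]
  have hhalf_turn : w * exp (I * ((16 : ℕ) * (π / 16) : ℝ)) = -w := by
    push_cast
    rw [show I * (16 * (π / 16)) = π * I by ring, exp_pi_mul_I, mul_neg_one]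
  have h := RestrictedHolder.abs_sub_mul_exp_nat_mul_le hs hK hα.le hθ w t 16
  rw [hhalf_turn, hodd, sub_neg_eq_add, ← two_mul, abs_mul, abs_two] at h
  push_cast at h
  linarith

/-- a section `s` of the flat line bundle `V` with monodromy `−1`
around `{0} × ℝ^{n-2}` — realized as an odd function on the double cover
`(w,t) ↦ (w², t)` — satisfying the restricted Hölder bound
`|s(p) − s(p')| ≤ K |p − p'|^α` for pairs with `|p − p'| ≤ ½ min(|z|, |z'|)`
(compared via parallel transport, i.e. using lifts on the same sheet) satisfies
the pointwise bound `|s(z,t)| ≤ C K |z|^α`, with `C` depending only on `α`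
and `n`. Here `n = m + 2`, `z = w²`. -/
theorem holder_section_vanishing (m : ℕ) (α : ℝ) (hα : 0 < α) (hα' : α < 1/2) :
    ∃ C : ℝ, 0 < C ∧
      ∀ (s : ℂ → EuclideanSpace ℝ (Fin m) → ℝ) (K : ℝ), 0 ≤ K →
        (∀ w t, s (-w) t = - s w t) →
        (∀ w w' t t',
          coverDist m w w' t t' ≤ (1/2) * min (‖w‖ ^ 2) (‖w'‖ ^ 2) →
          ‖w - w'‖ ≤ ‖w + w'‖ →
          |s w t - s w' t'| ≤ K * (coverDist m w w' t t') ^ α) →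
        ∀ w t, |s w t| ≤ C * K * (‖w‖ ^ 2) ^ α :=
  holder_section_vanishing_general m α hα
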